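/- arXiv:2006.08118 — 9 statements merged into one kernel-verified Lean document; each statement's English description precedes it below -/
import Mathlib

section
/- Let R be a ring, let A and B be right R-modules which are both hollow, and put M = A ⊕ B. Then every nonzero proper direct summand X of M is hollow. -/
/-- A submodule `N` of `M` is *small* (superfluous) in `M` if `N + X ≠ M`
for every proper submodule `X` of `M`. -/
def IsSmallSubmodule {R M : Type*} [Ring R] [AddCommGroup M] [Module R M]
    (N : Submodule R M) : Prop :=
  ∀ X : Submodule R M, X ≠ ⊤ → N ⊔ X ≠ ⊤

/-- A nonzero module `M` is *hollow* if every proper submodule of `M` is small in `M`. -/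
def IsHollowModule (R M : Type*) [Ring R] [AddCommGroup M] [Module R M] : Prop :=
  Nontrivial M ∧ ∀ N : Submodule R M, N ≠ ⊤ → IsSmallSubmodule N

/-- A submodule `N` of `M` is *essential* in `M` if `N ∩ X ≠ 0`
for every nonzero submodule `X` of `M`. -/
def IsEssentialSubmodule {R M : Type*} [Ring R] [AddCommGroup M] [Module R M]
    (N : Submodule R M) : Prop :=
  ∀ X : Submodule R M, X ≠ ⊥ → N ⊓ X ≠ ⊥

/-- A nonzero module `M` is *uniform* if every nonzero submodule of `M` is essential in `M`. -/
def IsUniformModule (R M : Type*) [Ring R] [AddCommGroup M] [Module R M] : Prop :=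
  Nontrivial M ∧ ∀ N : Submodule R M, N ≠ ⊥ → IsEssentialSubmodule N

/-- `X` is a direct summand of `M`. -/
def IsDirectSummand {R M : Type*} [Ring R] [AddCommGroup M] [Module R M]
    (X : Submodule R M) : Prop :=
  ∃ Y : Submodule R M, IsCompl X Y

/-- A module `M` is *lifting* if for every submodule `N` of `M` there is a direct summand
`X` of `M` with `X ⊆ N` such that `N/X` is small in `M/X`. -/
def IsLiftingModule (R M : Type*) [Ring R] [AddCommGroup M] [Module R M] : Prop :=
  ∀ N : Submodule R M, ∃ X : Submodule R M,
    X ≤ N ∧ IsDirectSummand X ∧ IsSmallSubmodule (N.map X.mkQ)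

/-- A module `M` is *extending* if for every submodule `N` of `M` there is a direct summand
`X` of `M` such that `N` is essential in `X`. -/
def IsExtendingModule (R M : Type*) [Ring R] [AddCommGroup M] [Module R M] : Prop :=
  ∀ N : Submodule R M, ∃ X : Submodule R M,
    IsDirectSummand X ∧ N ≤ X ∧ ∀ Y : Submodule R M, Y ≤ X → Y ≠ ⊥ → N ⊓ Y ≠ ⊥

/-- A module is *uniserial* if its submodules are linearly ordered by inclusion. -/
def IsUniserialModule (R M : Type*) [Ring R] [AddCommGroup M] [Module R M] : Prop :=
  ∀ A B : Submodule R M, A ≤ B ∨ B ≤ A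

/-- An internal finite direct sum decomposition `M = ⨁ᵢ Fᵢ`. -/
def IsInternalDirectSum {R M ι : Type*} [Ring R] [AddCommGroup M] [Module R M]
    (F : ι → Submodule R M) : Prop :=
  (⨆ i, F i) = ⊤ ∧ ∀ i, Disjoint (F i) (⨆ j ∈ ({i}ᶜ : Set ι), F j)

/-- A module `M` satisfies the *finite internal exchange property* if for any direct
summand `X` of `M` and any finite direct sum decomposition `M = M₁ ⊕ ⋯ ⊕ Mₙ` there are
submodules `Mᵢ' ⊆ Mᵢ` with `M = X ⊕ M₁' ⊕ ⋯ ⊕ Mₙ'`. -/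
def SatisfiesFIEP (R M : Type*) [Ring R] [AddCommGroup M] [Module R M] : Prop :=
  ∀ (X : Submodule R M), IsDirectSummand X →
    ∀ (n : ℕ) (Mi : Fin n → Submodule R M), IsInternalDirectSum Mi →
      ∃ Mi' : Fin n → Submodule R M, (∀ i, Mi' i ≤ Mi i) ∧
        IsInternalDirectSum (fun o : Option (Fin n) => o.elim X Mi')

/-!
Write `M = A × B = X ⊕ Y` and suppose `X = N + Z` with `N, Z < X`. No `W < X` satisfies
`W + A = M`: otherwise `M/W` would be a quotient of the hollow module `A`, so `M = X + Y + W`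
would give `X + W = M` or `Y + W = M`, both impossible by modularity. As `M/A ≅ B` is hollow
and `M = N + Z + Y + A`, it follows that `Y + A = M`. Then `M/Y` is a quotient of `A`, hence
hollow, and `M = N + Z + Y` gives `N + Y = M` or `Z + Y = M`, again impossible.
-/

section

variable {R M : Type*} [Ring R] [AddCommGroup M] [Module R M]

theorem IsCompl.sup_ne_top_of_lt {α : Type*} [Lattice α] [BoundedOrder α] [IsModularLattice α]
    {X Y W : α} (hc : IsCompl X Y) (hWX : W < X) : W ⊔ Y ≠ ⊤ := fun h =>
  hWX.ne (eq_of_le_of_inf_le_of_sup_le hWX.le (hc.inf_eq_bot ▸ bot_le) (h ▸ le_top))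

theorem IsHollowModule.eq_top_or_eq_top_of_sup_eq_top (h : IsHollowModule R M)
    {U V : Submodule R M} (hUV : U ⊔ V = ⊤) : U = ⊤ ∨ V = ⊤ := by
  by_contra! hne
  exact h.2 U hne.1 V hne.2 hUV

theorem IsHollowModule.of_surjective {M' : Type*} [AddCommGroup M'] [Module R M'] [Nontrivial M']
    (h : IsHollowModule R M) (f : M →ₗ[R] M') (hf : Function.Surjective f) :
    IsHollowModule R M' := by
  have comap_ne_top : ∀ {N : Submodule R M'}, N ≠ ⊤ → N.comap f ≠ ⊤ := fun {N} hN hN' =>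
    hN (by rw [← Submodule.map_comap_eq_of_surjective hf N, hN', Submodule.map_top,
      LinearMap.range_eq_top.2 hf])
  refine ⟨inferInstance, fun N hN P hP hNP => h.2 _ (comap_ne_top hN) _ (comap_ne_top hP) ?_⟩
  have hmap : (N.comap f ⊔ P.comap f).map f = ⊤ := by
    rw [Submodule.map_sup, Submodule.map_comap_eq_of_surjective hf,
      Submodule.map_comap_eq_of_surjective hf, hNP]
  rwa [LinearMap.map_eq_top_iff (LinearMap.range_eq_top.2 hf),
    sup_eq_left.2 (le_sup_of_le_left (LinearMap.ker_le_comap f))] at hmap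

theorem isHollowModule_quotient_of_sup_range_eq_top {H : Type*} [AddCommGroup H] [Module R H]
    (hH : IsHollowModule R H) (g : H →ₗ[R] M) {W : Submodule R M} (hW : W ≠ ⊤)
    (hWg : W ⊔ LinearMap.range g = ⊤) : IsHollowModule R (M ⧸ W) := by
  have : Nontrivial (M ⧸ W) := Submodule.Quotient.nontrivial_iff.2 hW
  refine hH.of_surjective (W.mkQ ∘ₗ g) ?_
  rwa [← LinearMap.range_eq_top, LinearMap.range_comp, Submodule.map_mkQ_eq_top]

theorem sup_eq_top_or_sup_eq_top_of_isHollowModule_quotient {W : Submodule R M}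
    (hW : IsHollowModule R (M ⧸ W)) {U V : Submodule R M} (h : U ⊔ V ⊔ W = ⊤) :
    U ⊔ W = ⊤ ∨ V ⊔ W = ⊤ := by
  simp only [sup_comm _ W, ← Submodule.map_mkQ_eq_top] at h ⊢
  exact hW.eq_top_or_eq_top_of_sup_eq_top (by rw [← Submodule.map_sup, h])

theorem Submodule.isHollowModule_of_forall_sup_ne {X : Submodule R M} (hX : X ≠ ⊥)
    (h : ∀ N Z : Submodule R M, N < X → Z < X → N ⊔ Z ≠ X) : IsHollowModule R X := by
  have map_lt : ∀ {N : Submodule R X}, N ≠ ⊤ → N.map X.subtype < X := fun hN => by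
    simpa using (MapSubtype.orderEmbedding X).lt_iff_lt.2 (lt_top_iff_ne_top.2 hN)
  refine ⟨nontrivial_iff_ne_bot.2 hX, fun N hN Z hZ hNZ => h _ _ (map_lt hN) (map_lt hZ) ?_⟩
  rw [← map_sup, hNZ, map_subtype_top]

theorem IsCompl.sup_range_ne_top_of_lt {H : Type*} [AddCommGroup H] [Module R H]
    (hH : IsHollowModule R H) (g : H →ₗ[R] M) {X Y W : Submodule R M} (hc : IsCompl X Y)
    (hXT : X ≠ ⊤) (hWX : W < X) : W ⊔ LinearMap.range g ≠ ⊤ := fun hWg => by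
  have hW : IsHollowModule R (M ⧸ W) :=
    isHollowModule_quotient_of_sup_range_eq_top hH g (ne_top_of_lt hWX) hWg
  rcases sup_eq_top_or_sup_eq_top_of_isHollowModule_quotient hW
    (show X ⊔ Y ⊔ W = ⊤ by rw [hc.sup_eq_top, top_sup_eq]) with h | h
  · exact hXT (by rwa [sup_eq_left.2 hWX.le] at h)
  · exact hc.sup_ne_top_of_lt hWX (by rwa [sup_comm] at h)

theorem IsCompl.isHollowModule_of_sup_range_eq_top {F G : Type*} [AddCommGroup F] [Module R F]
    [AddCommGroup G] [Module R G] (hF : IsHollowModule R F) (hG : IsHollowModule R G)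
    (f : F →ₗ[R] M) (g : G →ₗ[R] M) (hfg : LinearMap.range f ⊔ LinearMap.range g = ⊤)
    (hg : LinearMap.range g ≠ ⊤) {X Y : Submodule R M} (hc : IsCompl X Y) (hX0 : X ≠ ⊥)
    (hXT : X ≠ ⊤) : IsHollowModule R X := by
  refine Submodule.isHollowModule_of_forall_sup_ne hX0 fun N Z hN hZ hNZ => ?_
  have hNZY : N ⊔ Z ⊔ Y = ⊤ := by rw [hNZ, hc.sup_eq_top]
  have hYg : Y ⊔ LinearMap.range g = ⊤ := by
    have hQ : IsHollowModule R (M ⧸ LinearMap.range g) :=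
      isHollowModule_quotient_of_sup_range_eq_top hF f hg (by rwa [sup_comm])
    rcases sup_eq_top_or_sup_eq_top_of_isHollowModule_quotient hQ
      (show N ⊔ Z ⊔ Y ⊔ LinearMap.range g = ⊤ by rw [hNZY, top_sup_eq]) with h | h
    · rcases sup_eq_top_or_sup_eq_top_of_isHollowModule_quotient hQ h with h | h
      · exact absurd h (hc.sup_range_ne_top_of_lt hG g hXT hN)
      · exact absurd h (hc.sup_range_ne_top_of_lt hG g hXT hZ)
    · exact h
  have hY : IsHollowModule R (M ⧸ Y) :=
    isHollowModule_quotient_of_sup_range_eq_top hG g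
      (fun hY => hX0 (eq_bot_of_top_isCompl (hY ▸ hc.symm))) hYg
  rcases sup_eq_top_or_sup_eq_top_of_isHollowModule_quotient hY hNZY with h | h
  · exact hc.sup_ne_top_of_lt hN h
  · exact hc.sup_ne_top_of_lt hZ h

end

/-- If `A` and `B` are hollow right `R`-modules and `M = A ⊕ B`, then every nonzero proper
direct summand `X` of `M` is hollow. -/
theorem stmt_0 {R A B : Type*} [Ring R] [AddCommGroup A] [AddCommGroup B]
    [Module R A] [Module R B]
    (hA : IsHollowModule R A) (hB : IsHollowModule R B)
    (X : Submodule R (A × B)) (hX0 : X ≠ ⊥) (hXT : X ≠ ⊤) (hXds : IsDirectSummand X) :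
    IsHollowModule R ↥X := by
  obtain ⟨Y, hc⟩ := hXds
  have hinl : LinearMap.range (LinearMap.inl R A B) ≠ ⊤ := by
    have : Nontrivial B := hB.1
    obtain ⟨b, hb⟩ := exists_ne (0 : B)
    rw [LinearMap.range_inl, Ne, LinearMap.ker_eq_top]
    exact fun h => hb (by simpa using LinearMap.congr_fun h (0, b))
  exact hc.isHollowModule_of_sup_range_eq_top hB hA (LinearMap.inr R A B) (LinearMap.inl R A B)
    (by rw [sup_comm, LinearMap.sup_range_inl_inr]) hinl hX0 hXT
end

section
/- Let R be a ring, let A and B be right R-modules which are both uniform, and put M = A ⊕ B. Then every nonzero proper direct summand X of M is uniform. -/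
/-
The kernel `A × 0` of the projection `A × B → B` is uniform and so is `B`. Two nonzero submodules
`P`, `Q` with `P ∩ Q = 0` cannot both embed in `B`, so `P ⊕ Q` meets the kernel. If `X` were not
uniform, two independent nonzero submodules `U`, `V` of `X` together with a nonzero complement
`Y` of `X` would make `U ⊕ V` and `U ⊕ Y` both meet the uniform kernel, hence their intersection
`U` meets it too; likewise `V` does, so `U ∩ V ≠ 0`.
-/

open LinearMap Submodule

theorem sup_inf_sup_eq_of_disjoint {α : Type*} [Lattice α] [OrderBot α] [IsModularLattice α]
    {a b c : α} (h : Disjoint (a ⊔ b) c) : (a ⊔ c) ⊓ (a ⊔ b) = a := by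
  rw [sup_inf_assoc_of_le c le_sup_left, h.symm.eq_bot, sup_bot_eq]

section

variable {R M N : Type*} [Ring R] [AddCommGroup M] [Module R M] [AddCommGroup N] [Module R N]

theorem IsUniformModule.of_linearEquiv (h : IsUniformModule R M) (e : M ≃ₗ[R] N) :
    IsUniformModule R N := by
  have : Nontrivial M := h.1
  refine ⟨e.injective.nontrivial, fun P hP Q hQ => ?_⟩
  let φ := orderIsoMapComap e.symm
  have hφ := h.2 (φ P) (by simpa using hP) (φ Q) (by simpa using hQ)
  rwa [← φ.map_inf, Ne, map_eq_bot_iff] at hφ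

theorem Submodule.not_disjoint_inf_of_isUniformModule {K P Q : Submodule R M}
    (hK : IsUniformModule R K) (hP : ¬Disjoint P K) (hQ : ¬Disjoint Q K) :
    ¬Disjoint (P ⊓ Q) K := by
  rw [disjoint_comm, disjoint_iff_comap_eq_bot] at hP hQ ⊢
  rw [comap_inf]
  exact hK.2 _ hP _ hQ

theorem LinearMap.not_disjoint_sup_ker {f : M →ₗ[R] N} (hN : IsUniformModule R N)
    {P Q : Submodule R M} (hP : P ≠ ⊥) (hQ : Q ≠ ⊥) (hPQ : Disjoint P Q) :
    ¬Disjoint (P ⊔ Q) (ker f) := by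
  intro hdis
  have map_ne_bot {S : Submodule R M} (hS : S ≠ ⊥) (hSk : Disjoint S (ker f)) : S.map f ≠ ⊥ :=
    fun h => hS (hSk.eq_bot_of_le (le_ker_iff_map.mpr h))
  obtain ⟨b, hb, hb0⟩ := (Submodule.ne_bot_iff _).mp <| hN.2 _
    (map_ne_bot hP (hdis.mono_left le_sup_left)) _ (map_ne_bot hQ (hdis.mono_left le_sup_right))
  obtain ⟨⟨p, hp, rfl⟩, ⟨q, hq, hqp⟩⟩ := mem_inf.mp hb
  have hpq : p - q = 0 :=
    (disjoint_def.mp hdis) _ (sub_mem (mem_sup_left hp) (mem_sup_right hq))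
      (by rw [mem_ker, map_sub, hqp, sub_self])
  rw [sub_eq_zero] at hpq
  subst hpq
  exact hb0 (by rw [disjoint_def.mp hPQ p hp hq, map_zero])

/-- A module with a uniform submodule and a uniform quotient by it has no three independent
nonzero submodules. -/
theorem LinearMap.not_disjoint_sup_of_isUniformModule {f : M →ₗ[R] N}
    (hK : IsUniformModule R (ker f)) (hN : IsUniformModule R N) {U V W : Submodule R M}
    (hU : U ≠ ⊥) (hV : V ≠ ⊥) (hW : W ≠ ⊥) (hUV : Disjoint U V) : ¬Disjoint (U ⊔ V) W := by
  intro hUVW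
  have hU_ker : ¬Disjoint U (ker f) := by
    have := not_disjoint_inf_of_isUniformModule hK
      (not_disjoint_sup_ker hN hU hW (hUVW.mono_left le_sup_left))
      (not_disjoint_sup_ker hN hU hV hUV)
    rwa [sup_inf_sup_eq_of_disjoint hUVW] at this
  have hV_ker : ¬Disjoint V (ker f) := by
    have := not_disjoint_inf_of_isUniformModule hK
      (not_disjoint_sup_ker hN hV hW (hUVW.mono_left le_sup_right))
      (not_disjoint_sup_ker hN hV hU hUV.symm)
    rwa [sup_inf_sup_eq_of_disjoint (sup_comm U V ▸ hUVW)] at this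
  exact not_disjoint_inf_of_isUniformModule hK hU_ker hV_ker (hUV.eq_bot ▸ disjoint_bot_left)

theorem Submodule.isUniformModule_of_not_disjoint {X : Submodule R M} (hX : X ≠ ⊥)
    (h : ∀ U ≤ X, ∀ V ≤ X, U ≠ ⊥ → V ≠ ⊥ → ¬Disjoint U V) : IsUniformModule R X := by
  refine ⟨nontrivial_iff_ne_bot.mpr hX, fun P hP Q hQ hPQ => ?_⟩
  have map_ne_bot {S : Submodule R X} (hS : S ≠ ⊥) : S.map X.subtype ≠ ⊥ := by
    rwa [Ne, ← le_ker_iff_map, ker_subtype, le_bot_iff]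
  exact h _ (map_subtype_le X P) _ (map_subtype_le X Q) (map_ne_bot hP) (map_ne_bot hQ)
    (disjoint_map X.injective_subtype (disjoint_iff.mpr hPQ))

end

/-- If `A` and `B` are uniform right `R`-modules and `M = A ⊕ B`, then every nonzero proper
direct summand `X` of `M` is uniform. -/
theorem stmt_1 {R A B : Type*} [Ring R] [AddCommGroup A] [AddCommGroup B]
    [Module R A] [Module R B]
    (hA : IsUniformModule R A) (hB : IsUniformModule R B)
    (X : Submodule R (A × B)) (hX0 : X ≠ ⊥) (hXT : X ≠ ⊤) (hXds : IsDirectSummand X) :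
    IsUniformModule R ↥X := by
  obtain ⟨Y, hXY⟩ := hXds
  have hY : Y ≠ ⊥ := fun h => hXT (eq_top_of_isCompl_bot (h ▸ hXY))
  have hK : IsUniformModule R (ker (snd R A B)) := by
    rw [ker_snd]
    exact hA.of_linearEquiv (LinearEquiv.ofInjective _ inl_injective)
  refine isUniformModule_of_not_disjoint hX0 fun U hU V hV hU0 hV0 hUV => ?_
  exact not_disjoint_sup_of_isUniformModule hK hB hU0 hV0 hY hUV
    (hXY.disjoint.mono_left (sup_le hU hV))
end

section
/- Let U be a hollow and uniform right R-module, put M = U², U₁ = U × 0 and U₂ = 0 × U. Then for any submodule N₁ of U₁ and any surjective homomorphism h₁ : N₁ → U₂, the graph ⟨h₁⟩ = {x + h₁(x) : x ∈ N₁} is a direct summand of M. -/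
/-!
Write `N₁ = N × 0` and `h₁ = (0, f)`, so the graph is `{(x, f x) : x ∈ N}` for a surjection
`f : N → U`. If `f` is injective, `U × 0` is a complement; if `N = U`, then `0 × U` is.
Otherwise the transposed graph `{(f x, x) : x ∈ N}` is a complement: uniformity makes `ker f`
essential, which forces the two graphs to meet trivially, and hollowness makes `N` small in `U`,
which forces them to span `U × U`.
-/

open LinearMap

section GraphComplements

variable {R N U V : Type*} [Ring R] [AddCommGroup N] [Module R N] [AddCommGroup U] [Module R U]
  [AddCommGroup V] [Module R V]

theorem disjoint_range_prod_fst (i : N →ₗ[R] U) {f : N →ₗ[R] V} (hf : Function.Injective f) :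
    Disjoint (range (i.prod f)) (Submodule.fst R U V) := by
  rw [Submodule.disjoint_def]
  rintro _ ⟨x, rfl⟩ hx
  have hfx : f x = 0 := by simpa [Submodule.fst] using hx
  simp [hf (hfx.trans (map_zero f).symm)]

theorem codisjoint_range_prod_fst (i : N →ₗ[R] U) {f : N →ₗ[R] V} (hf : Function.Surjective f) :
    Codisjoint (range (i.prod f)) (Submodule.fst R U V) := by
  rw [codisjoint_iff, Submodule.eq_top_iff']
  rintro ⟨u, v⟩
  obtain ⟨x, rfl⟩ := hf v
  refine Submodule.mem_sup.2 ⟨(i x, f x), ⟨x, rfl⟩, (u - i x, 0), by simp [Submodule.fst], ?_⟩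
  simp

theorem isCompl_range_prod_fst (i : N →ₗ[R] U) {f : N →ₗ[R] V} (hf : Function.Bijective f) :
    IsCompl (range (i.prod f)) (Submodule.fst R U V) :=
  ⟨disjoint_range_prod_fst i hf.1, codisjoint_range_prod_fst i hf.2⟩

theorem isCompl_range_prod_snd {i : N →ₗ[R] U} (hi : Function.Bijective i) (f : N →ₗ[R] V) :
    IsCompl (range (i.prod f)) (Submodule.snd R U V) := by
  constructor
  · rw [Submodule.disjoint_def]
    rintro _ ⟨x, rfl⟩ hx
    have hix : i x = 0 := by simpa [Submodule.snd] using hx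
    simp [hi.1 (hix.trans (map_zero i).symm)]
  · rw [codisjoint_iff, Submodule.eq_top_iff']
    rintro ⟨u, v⟩
    obtain ⟨x, rfl⟩ := hi.2 u
    refine Submodule.mem_sup.2 ⟨(i x, f x), ⟨x, rfl⟩, (0, v - f x), by simp [Submodule.snd], ?_⟩
    simp

end GraphComplements

section TransposedGraph

variable {R N U : Type*} [Ring R] [AddCommGroup N] [Module R N] [AddCommGroup U] [Module R U]
  {i f : N →ₗ[R] U}

theorem disjoint_range_prod_range_prod_swap (hi : Function.Injective i)
    (hker : IsEssentialSubmodule ((ker f).map i)) :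
    Disjoint (range (i.prod f)) (range (f.prod i)) := by
  rw [Submodule.disjoint_def]
  rintro _ ⟨x, rfl⟩ ⟨y, hy⟩
  have hfy : f y = i x := congrArg Prod.fst hy
  have hiy : i y = f x := congrArg Prod.snd hy
  suffices hix : i x = 0 by simp [hi (hix.trans (map_zero i).symm)]
  by_contra hix
  have hspan : Submodule.span R {i x} ≠ ⊥ := by rwa [Ne, Submodule.span_singleton_eq_bot]
  obtain ⟨_, ⟨⟨z, hz, rfl⟩, hzx⟩, hiz⟩ := Submodule.exists_mem_ne_zero_of_ne_bot (hker _ hspan)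
  obtain ⟨r, hr⟩ := Submodule.mem_span_singleton.1 hzx
  -- `r • x ∈ ker f`, so `r` kills `y` (as `i y = f x`) and then `i x = f y`.
  have hrx : r • x = z := hi (by rw [map_smul, hr])
  have hry : r • y = 0 := hi (by rw [map_smul, hiy, ← map_smul, hrx, mem_ker.1 hz, map_zero])
  exact hiz (by rw [← hr, ← hfy, ← map_smul, hry, map_zero])

theorem codisjoint_range_prod_range_prod_swap (hsmall : IsSmallSubmodule (range i))
    (hf : Function.Surjective f) :
    Codisjoint (range (i.prod f)) (range (f.prod i)) := by
  set S := range (i.prod f) ⊔ range (f.prod i)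
  set W := S.comap (inl R U U)
  have hiW : range i ⊔ W = ⊤ := by
    rw [Submodule.eq_top_iff']
    intro u
    obtain ⟨x₁, hx₁⟩ := hf (-u)
    obtain ⟨x₂, hx₂⟩ := hf (i x₁)
    have hmem : i x₂ + u ∈ W := by
      have hdiff : inl R U U (i x₂ + u) = (i x₂, f x₂) - (f x₁, i x₁) := by simp [hx₁, hx₂]
      rw [Submodule.mem_comap, hdiff]
      exact S.sub_mem (Submodule.mem_sup_left ⟨x₂, rfl⟩) (Submodule.mem_sup_right ⟨x₁, rfl⟩)
    exact Submodule.mem_sup.2 ⟨i (-x₂), ⟨-x₂, rfl⟩, _, hmem, by simp⟩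
  have hW : W = ⊤ := by
    by_contra hW
    exact hsmall W hW hiW
  have hfst : Submodule.fst R U U ≤ S := by
    rintro ⟨u, v⟩ huv
    obtain rfl : v = 0 := by simpa [Submodule.fst] using huv
    simpa [W] using hW.ge (Submodule.mem_top (x := u))
  rw [codisjoint_iff, eq_top_iff, ← (codisjoint_range_prod_fst i hf).eq_top]
  exact sup_le le_sup_left hfst

theorem isCompl_range_prod_range_prod_swap (hi : Function.Injective i)
    (hker : IsEssentialSubmodule ((ker f).map i)) (hsmall : IsSmallSubmodule (range i))
    (hf : Function.Surjective f) :
    IsCompl (range (i.prod f)) (range (f.prod i)) :=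
  ⟨disjoint_range_prod_range_prod_swap hi hker, codisjoint_range_prod_range_prod_swap hsmall hf⟩

end TransposedGraph

/-- Let `U` be a hollow and uniform module, `M = U²`, `U₁ = U × 0`, `U₂ = 0 × U`.
For any submodule `N₁` of `U₁` and any surjective homomorphism `h₁ : N₁ → U₂`, the graph
`⟨h₁⟩ = {x + h₁(x) : x ∈ N₁}` is a direct summand of `M`. -/
theorem stmt_2 {R U : Type*} [Ring R] [AddCommGroup U] [Module R U]
    (hH : IsHollowModule R U) (hU : IsUniformModule R U)
    (N₁ : Submodule R (U × U)) (hN₁ : N₁ ≤ Submodule.fst R U U)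
    (h₁ : ↥N₁ →ₗ[R] ↥(Submodule.snd R U U)) (hs : Function.Surjective h₁) :
    IsDirectSummand
      (LinearMap.range (N₁.subtype + (Submodule.snd R U U).subtype ∘ₗ h₁)) := by
  set i := (Submodule.fstEquiv R U U).toLinearMap ∘ₗ Submodule.inclusion hN₁
  set f := (Submodule.sndEquiv R U U).toLinearMap ∘ₗ h₁
  have hgraph : N₁.subtype + (Submodule.snd R U U).subtype ∘ₗ h₁ = i.prod f := by
    ext x
    · simpa [i, f] using (Submodule.mem_bot R).1 (h₁ x).2
    · simpa [i, f, Submodule.fst] using hN₁ x.2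
  have hi : Function.Injective i := by
    simpa [i] using Submodule.inclusion_injective hN₁
  have hf : Function.Surjective f := by
    simpa [f] using hs
  rw [hgraph]
  by_cases hker : ker f = ⊥
  · exact ⟨_, isCompl_range_prod_fst i ⟨ker_eq_bot.1 hker, hf⟩⟩
  by_cases hrange : range i = ⊤
  · exact ⟨_, isCompl_range_prod_snd ⟨hi, range_eq_top.1 hrange⟩ f⟩
  have hker' : (ker f).map i ≠ ⊥ := by
    simpa using (Submodule.map_injective_of_injective hi).ne hker
  exact ⟨_, isCompl_range_prod_range_prod_swap hi (hU.2 _ hker') (hH.2 _ hrange) hf⟩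
end

section
/- Let U be a hollow and uniform right R-module, put M = U², U₁ = U × 0 and U₂ = 0 × U. Suppose that for any right R-module X, any homomorphism f : U₁ → X and any surjective homomorphism g : U₂ → X, one of the following holds: (i) there exists a homomorphism h : U₁ → U₂ such that f = g ∘ h; (ii) there exist a submodule N of U₂ and a surjective homomorphism h : N → U₁ such that g restricted to N equals f ∘ h. Then M is lifting. -/
universe u

/-!
It suffices to write every submodule `N` of `M = U × U` as `X + S` with `X` a direct summand and
`S` small in `M`, since then `N / X` is the image of `S` in `M / X`.

If neither projection of `N` is onto, `N ≤ π₁ N × π₂ N` is a sum of two small submodules. If one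
projection is onto, then, `U` being hollow, either the other projection or the difference of the
two projections is onto, so after a shear automorphism of `M` both projections of `N` are onto.
Then the maps `f : U₁ → M / N` and `g : U₂ → M / N` induced by the inclusions are surjective, and
`N ⊓ U₁`, `N ⊓ U₂` are proper in `U₁`, `U₂`, hence small. In case (i) the graph `{u - h u}` is a
complement of `U₂` contained in `N`, so `N = graph + (N ⊓ U₂)`. In case (ii) `N + N₀ = M` and the
smallness of `N ⊓ U₂` force `N₀ = U₂`, and the same argument runs with `U₁` and `U₂` exchanged.
-/

section

open LinearMap Submodule

variable {R M M' : Type*} [Ring R] [AddCommGroup M] [Module R M] [AddCommGroup M'] [Module R M']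
  {A B N S : Submodule R M}

theorem isSmallSubmodule_bot : IsSmallSubmodule (⊥ : Submodule R M) := fun X hX => by
  rwa [bot_sup_eq]

theorem IsSmallSubmodule.mono (hN : IsSmallSubmodule N) (hSN : S ≤ N) : IsSmallSubmodule S :=
  fun X hX hSX => hN X hX (top_unique (hSX ▸ sup_le_sup_right hSN X))

theorem IsSmallSubmodule.sup (hA : IsSmallSubmodule A) (hB : IsSmallSubmodule B) :
    IsSmallSubmodule (A ⊔ B) := fun X hX hABX =>
  hB X hX (by_contra fun hBX => hA _ hBX (by rwa [← sup_assoc]))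

theorem IsSmallSubmodule.map (f : M →ₗ[R] M') (hN : IsSmallSubmodule N) :
    IsSmallSubmodule (N.map f) := by
  intro X hX hNX
  have hcover : N ⊔ X.comap f = ⊤ := by
    refine eq_top_iff.mpr fun m _ => ?_
    obtain ⟨_, ⟨n, hn, rfl⟩, x, hx, hnx⟩ := mem_sup.mp (hNX ▸ mem_top : f m ∈ N.map f ⊔ X)
    refine mem_sup.mpr ⟨n, hn, m - n, ?_, add_sub_cancel n m⟩
    rwa [mem_comap, map_sub, ← hnx, add_sub_cancel_left]
  have hfX : range f ≤ X := range_le_iff_comap.mpr (by_contra fun h => hN _ h hcover)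
  exact hX (top_unique (hNX ▸ sup_le (map_le_range.trans hfX) le_rfl))

theorem IsSmallSubmodule.of_map_fst_of_map_snd {N : Submodule R (M × M')}
    (h₁ : IsSmallSubmodule (N.map (fst R M M'))) (h₂ : IsSmallSubmodule (N.map (snd R M M'))) :
    IsSmallSubmodule N :=
  ((h₁.map (inl R M M')).sup (h₂.map (inr R M M'))).mono fun n hn => by
    rw [← Prod.fst_add_snd n]
    exact add_mem_sup (mem_map_of_mem (mem_map_of_mem hn)) (mem_map_of_mem (mem_map_of_mem hn))

theorem IsHollowModule.eq_top_or_eq_top_of_sup_eq_top_s4 {U : Type*} [AddCommGroup U] [Module R U]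
    (hH : IsHollowModule R U) {A B : Submodule R U} (h : A ⊔ B = ⊤) : A = ⊤ ∨ B = ⊤ := by
  by_contra! hAB
  exact hH.2 A hAB.1 B hAB.2 h

theorem IsHollowModule.isSmallSubmodule_inf_range {U : Type*} [AddCommGroup U] [Module R U]
    (hH : IsHollowModule R U) (f : U →ₗ[R] M) (hN : N ≠ ⊤) (h : N ⊔ range f = ⊤) :
    IsSmallSubmodule (N ⊓ range f) := by
  have hfN : N.comap f ≠ ⊤ := fun htop =>
    hN (by rwa [← range_le_iff_comap, ← sup_eq_left, h, eq_comm] at htop)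
  rw [inf_comm, ← map_comap_eq]
  exact (hH.2 _ hfN).map f

def FactorsOrCovers (R : Type*) (A B : Type u) [Ring R] [AddCommGroup A] [Module R A]
    [AddCommGroup B] [Module R B] : Prop :=
  ∀ (X : Type u) [AddCommGroup X] [Module R X] (f : A →ₗ[R] X) (g : B →ₗ[R] X),
    Function.Surjective g →
      (∃ h : A →ₗ[R] B, f = g ∘ₗ h) ∨
      (∃ (N : Submodule R B) (h : ↥N →ₗ[R] A), Function.Surjective h ∧ g ∘ₗ N.subtype = f ∘ₗ h)

namespace Submodule

theorem sup_snd_eq_top_iff {N : Submodule R (M × M')} :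
    N ⊔ Submodule.snd R M M' = ⊤ ↔ N.map (LinearMap.fst R M M') = ⊤ := by
  rw [show Submodule.snd R M M' = ker (LinearMap.fst R M M') from rfl, ← comap_map_eq,
    ← range_le_iff_comap, range_fst, top_le_iff]

theorem sup_fst_eq_top_iff {N : Submodule R (M × M')} :
    N ⊔ Submodule.fst R M M' = ⊤ ↔ N.map (LinearMap.snd R M M') = ⊤ := by
  rw [show Submodule.fst R M M' = ker (LinearMap.snd R M M') from rfl, ← comap_map_eq,
    ← range_le_iff_comap, range_snd, top_le_iff]

theorem isCompl_fst_snd : IsCompl (Submodule.fst R M M') (Submodule.snd R M M') :=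
  ⟨disjoint_iff.mpr (fst_inf_snd R M M'), codisjoint_iff.mpr (fst_sup_snd R M M')⟩

theorem isCompl_range_subtype_sub_comp (hAB : IsCompl A B) (φ : A →ₗ[R] B) :
    IsCompl (range (A.subtype - B.subtype ∘ₗ φ)) B := by
  constructor
  · refine disjoint_def.mpr ?_
    rintro _ ⟨a, rfl⟩ hB
    have ha : (a : M) ∈ B := by simpa using B.add_mem hB (φ a).2
    have ha0 : a = 0 := Subtype.ext (disjoint_def.mp hAB.disjoint a a.2 ha)
    simp [ha0]
  · refine codisjoint_iff_le_sup.mpr (hAB.sup_eq_top ▸ sup_le (fun a ha => ?_) le_sup_right)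
    have : a = (A.subtype - B.subtype ∘ₗ φ) ⟨a, ha⟩ + φ ⟨a, ha⟩ := by simp
    rw [this]
    exact add_mem_sup (mem_range_self _ _) (φ _).2

def IsSummandSupSmall (N : Submodule R M) : Prop :=
  ∃ X S : Submodule R M, IsDirectSummand X ∧ IsSmallSubmodule S ∧ X ⊔ S = N

theorem IsSummandSupSmall.exists_isSmallSubmodule_map_mkQ (h : N.IsSummandSupSmall) :
    ∃ X : Submodule R M, X ≤ N ∧ IsDirectSummand X ∧ IsSmallSubmodule (N.map X.mkQ) := by
  obtain ⟨X, S, hX, hS, rfl⟩ := h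
  refine ⟨X, le_sup_left, hX, ?_⟩
  rw [map_sup, mkQ_map_self, bot_sup_eq]
  exact hS.map _

theorem IsSummandSupSmall.of_map (e : M ≃ₗ[R] M')
    (h : (N.map (e : M →ₗ[R] M')).IsSummandSupSmall) : N.IsSummandSupSmall := by
  obtain ⟨X, S, ⟨Y, hXY⟩, hS, hXS⟩ := h
  refine ⟨X.map (e.symm : M' →ₗ[R] M), S.map (e.symm : M' →ₗ[R] M),
    ⟨Y.map (e.symm : M' →ₗ[R] M), ?_⟩, hS.map _, ?_⟩
  · simpa only [orderIsoMapComap_apply] using (orderIsoMapComap e.symm).isCompl hXY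
  · rw [← map_sup, hXS, ← map_comp, LinearEquiv.symm_comp, map_id]

theorem isSummandSupSmall_of_le_of_isCompl {X C : Submodule R M} (hXN : X ≤ N)
    (hXC : IsCompl X C) (hNC : IsSmallSubmodule (N ⊓ C)) : N.IsSummandSupSmall :=
  ⟨X, N ⊓ C, ⟨C, hXC⟩, hNC,
    by rw [inf_comm, ← sup_inf_assoc_of_le C hXN, hXC.sup_eq_top, top_inf_eq]⟩

theorem isSummandSupSmall_of_forall_sub_mem (hAB : IsCompl A B) (φ : A →ₗ[R] B)
    (hφ : ∀ a : A, (a : M) - φ a ∈ N) (hNB : IsSmallSubmodule (N ⊓ B)) : N.IsSummandSupSmall :=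
  isSummandSupSmall_of_le_of_isCompl (by rintro _ ⟨a, rfl⟩; exact hφ a)
    (isCompl_range_subtype_sub_comp hAB φ) hNB

theorem eq_of_sup_eq_top_of_isSmallSubmodule_inf {B' : Submodule R M} (hAB : IsCompl A B)
    (hNB : IsSmallSubmodule (N ⊓ B)) (hB' : B' ≤ B) (hNB' : N ⊔ B' = ⊤) : B' = B := by
  have hB : B' ⊔ N ⊓ B = B := by
    rw [← sup_inf_assoc_of_le N hB', sup_comm, hNB', top_inf_eq]
  have hB'A : B' ⊔ A = ⊤ := by
    by_contra hne
    refine hNB _ hne ?_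
    rw [sup_comm B', ← sup_assoc, sup_comm _ A, sup_assoc, sup_comm _ B', hB, hAB.sup_eq_top]
  rw [← sup_bot_eq B', ← hAB.inf_eq_bot, ← sup_inf_assoc_of_le A hB', hB'A, top_inf_eq]

theorem isSummandSupSmall_of_sup_eq_top {M : Type u} [AddCommGroup M] [Module R M]
    {A B N : Submodule R M} (hAB : IsCompl A B) (hyp : FactorsOrCovers R A B)
    (hNA : IsSmallSubmodule (N ⊓ A)) (hNB : IsSmallSubmodule (N ⊓ B))
    (hA : N ⊔ A = ⊤) (hB : N ⊔ B = ⊤) : N.IsSummandSupSmall := by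
  have surjective_mkQ_comp : ∀ {C : Submodule R M}, N ⊔ C = ⊤ →
      Function.Surjective (N.mkQ ∘ₗ C.subtype) := fun hC => by
    rwa [← range_eq_top, range_comp, range_subtype, map_mkQ_eq_top]
  rcases hyp _ (N.mkQ ∘ₗ A.subtype) (N.mkQ ∘ₗ B.subtype) (surjective_mkQ_comp hB) with
    ⟨φ, hφ⟩ | ⟨B₀, φ, hφ, hφB₀⟩
  · exact isSummandSupSmall_of_forall_sub_mem hAB φ
      (fun a => (Quotient.eq N).mp (LinearMap.congr_fun hφ a)) hNB
  have hB₀ : B₀ = ⊤ := by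
    have hcover : N ⊔ B₀.map B.subtype = ⊤ := by
      rw [← map_mkQ_eq_top, ← map_comp, ← range_subtype B₀, ← range_comp, hφB₀,
        range_comp_of_range_eq_top _ (range_eq_top.mpr hφ), range_eq_top]
      exact surjective_mkQ_comp hA
    refine map_injective_of_injective B.injective_subtype ?_
    rw [map_subtype_top]
    exact eq_of_sup_eq_top_of_isSmallSubmodule_inf hAB hNB (map_subtype_le B B₀) hcover
  exact isSummandSupSmall_of_forall_sub_mem hAB.symm (φ ∘ₗ (LinearEquiv.ofTop B₀ hB₀).symm)
    (fun b => (Quotient.eq N).mp (LinearMap.congr_fun hφB₀ ((LinearEquiv.ofTop B₀ hB₀).symm b))) hNA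

end Submodule

section Square

variable {U : Type u} [AddCommGroup U] [Module R U]

theorem IsHollowModule.isSummandSupSmall_of_map_fst_eq_top_of_map_snd_eq_top
    (hH : IsHollowModule R U) (hyp : FactorsOrCovers R (Submodule.fst R U U) (Submodule.snd R U U))
    {N : Submodule R (U × U)} (hN : N ≠ ⊤) (h₁ : N.map (LinearMap.fst R U U) = ⊤)
    (h₂ : N.map (LinearMap.snd R U U) = ⊤) : N.IsSummandSupSmall := by
  have hfst : Submodule.fst R U U = range (inl R U U) := (range_inl R U U).symm
  have hsnd : Submodule.snd R U U = range (inr R U U) := (range_inr R U U).symm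
  rw [← Submodule.sup_snd_eq_top_iff] at h₁
  rw [← Submodule.sup_fst_eq_top_iff] at h₂
  refine Submodule.isSummandSupSmall_of_sup_eq_top Submodule.isCompl_fst_snd hyp ?_ ?_ h₂ h₁
  · rw [hfst] at h₂ ⊢
    exact hH.isSmallSubmodule_inf_range (inl R U U) hN h₂
  · rw [hsnd] at h₁ ⊢
    exact hH.isSmallSubmodule_inf_range (inr R U U) hN h₁

theorem IsHollowModule.exists_linearEquiv_map_fst_eq_top_and_map_snd_eq_top
    (hH : IsHollowModule R U) {N : Submodule R (U × U)}
    (h : N.map (LinearMap.fst R U U) = ⊤ ∨ N.map (LinearMap.snd R U U) = ⊤) :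
    ∃ e : (U × U) ≃ₗ[R] (U × U),
      (N.map (e : (U × U) →ₗ[R] (U × U))).map (LinearMap.fst R U U) = ⊤ ∧
        (N.map (e : (U × U) →ₗ[R] (U × U))).map (LinearMap.snd R U U) = ⊤ := by
  wlog h₁ : N.map (LinearMap.fst R U U) = ⊤ generalizing N
  · have h₂ := h.resolve_left h₁
    obtain ⟨e, he⟩ := this (N := N.map (LinearEquiv.prodComm R U U : (U × U) →ₗ[R] (U × U)))
      (by simp only [← map_comp, LinearEquiv.fst_comp_prodComm, h₂, true_or])
      (by simpa only [← map_comp, LinearEquiv.fst_comp_prodComm])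
    exact ⟨(LinearEquiv.prodComm R U U).trans e, by simpa only [LinearEquiv.coe_trans, map_comp]⟩
  by_cases h₂ : N.map (LinearMap.snd R U U) = ⊤
  · exact ⟨LinearEquiv.refl R (U × U), by simpa using h₁, by simpa using h₂⟩
  -- `e (a, b) = (a, b - a)`
  let e := (LinearEquiv.refl R U).skewProd (LinearEquiv.refl R U) (-LinearMap.id)
  have hfst : LinearMap.fst R U U ∘ₗ (e : (U × U) →ₗ[R] (U × U)) = LinearMap.fst R U U := by
    ext <;> simp [e]
  refine ⟨e, by rwa [← map_comp, hfst], ?_⟩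
  refine (hH.eq_top_or_eq_top_of_sup_eq_top_s4 (eq_top_iff.mpr fun u _ => ?_)).resolve_left h₂
  obtain ⟨n, hn, rfl⟩ : u ∈ N.map (LinearMap.fst R U U) := h₁ ▸ mem_top
  have hu : n.1 = n.2 - (e n).2 := by simp [e]
  rw [fst_apply, hu]
  exact sub_mem_sup (mem_map_of_mem hn) (mem_map_of_mem (mem_map_of_mem hn))

end Square

end

theorem stmt_4_general {R : Type*} {U : Type u} [Ring R] [AddCommGroup U] [Module R U]
    (hH : IsHollowModule R U)
    (hyp : ∀ (X : Type u) [AddCommGroup X] [Module R X]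
      (f : ↥(Submodule.fst R U U) →ₗ[R] X) (g : ↥(Submodule.snd R U U) →ₗ[R] X),
      Function.Surjective g →
        (∃ h : ↥(Submodule.fst R U U) →ₗ[R] ↥(Submodule.snd R U U), f = g ∘ₗ h) ∨
        (∃ (N : Submodule R ↥(Submodule.snd R U U))
            (h : ↥N →ₗ[R] ↥(Submodule.fst R U U)),
          Function.Surjective h ∧ g ∘ₗ N.subtype = f ∘ₗ h)) :
    IsLiftingModule R (U × U) := by
  intro N
  refine Submodule.IsSummandSupSmall.exists_isSmallSubmodule_map_mkQ ?_
  by_cases hN : N = ⊤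
  · exact ⟨⊤, ⊥, ⟨⊥, isCompl_top_bot⟩, isSmallSubmodule_bot, (sup_bot_eq ⊤).trans hN.symm⟩
  by_cases h : N.map (LinearMap.fst R U U) = ⊤ ∨ N.map (LinearMap.snd R U U) = ⊤
  · obtain ⟨e, h₁, h₂⟩ := hH.exists_linearEquiv_map_fst_eq_top_and_map_snd_eq_top h
    have hN' : N.map (e : (U × U) →ₗ[R] (U × U)) ≠ ⊤ := by rwa [Ne, Submodule.map_eq_top_iff]
    exact (hH.isSummandSupSmall_of_map_fst_eq_top_of_map_snd_eq_top hyp hN' h₁ h₂).of_map e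
  · obtain ⟨h₁, h₂⟩ := not_or.mp h
    exact ⟨⊥, N, ⟨⊤, isCompl_bot_top⟩, .of_map_fst_of_map_snd (hH.2 _ h₁) (hH.2 _ h₂),
      bot_sup_eq N⟩

/-- Let `U` be hollow and uniform, `M = U²`, `U₁ = U × 0`, `U₂ = 0 × U`. Suppose that for
any module `X`, any homomorphism `f : U₁ → X` and any surjective homomorphism `g : U₂ → X`,
either (i) there is `h : U₁ → U₂` with `f = g ∘ h`, or (ii) there are a submodule `N` of
`U₂` and a surjective homomorphism `h : N → U₁` with `g|_N = f ∘ h`. Then `M` is lifting. -/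
theorem stmt_4 {R : Type*} {U : Type u} [Ring R] [AddCommGroup U] [Module R U]
    (hH : IsHollowModule R U) (hU : IsUniformModule R U)
    (hyp : ∀ (X : Type u) [AddCommGroup X] [Module R X]
      (f : ↥(Submodule.fst R U U) →ₗ[R] X) (g : ↥(Submodule.snd R U U) →ₗ[R] X),
      Function.Surjective g →
        (∃ h : ↥(Submodule.fst R U U) →ₗ[R] ↥(Submodule.snd R U U), f = g ∘ₗ h) ∨
        (∃ (N : Submodule R ↥(Submodule.snd R U U))
            (h : ↥N →ₗ[R] ↥(Submodule.fst R U U)),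
          Function.Surjective h ∧ g ∘ₗ N.subtype = f ∘ₗ h)) :
    IsLiftingModule R (U × U) :=
  stmt_4_general hH hyp
end

section
/- Let U be a uniform and hollow right R-module, put M = U², U₁ = U × 0 and U₂ = 0 × U. Suppose that for any right R-module X, any homomorphism f : X → U₂ and any injective homomorphism g : X → U₁, one of the following holds: (i) there exists a homomorphism h : U₁ → U₂ such that f = h ∘ g; (ii) there exist a submodule N of U₁ containing the image of g and a surjective homomorphism h : N → U₂ such that f = h ∘ g. Then M is extending. -/
universe u

section Lattice

variable {α β : Type*}

def IsEssentialIn [Lattice α] [OrderBot α] (a b : α) : Prop :=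
  a ≤ b ∧ ∀ c ≤ b, c ≠ ⊥ → a ⊓ c ≠ ⊥

theorem IsEssentialIn.map_orderIso [Lattice α] [OrderBot α] [Lattice β] [OrderBot β]
    (e : α ≃o β) {a b : α} (h : IsEssentialIn a b) : IsEssentialIn (e a) (e b) := by
  refine ⟨e.monotone h.1, fun c hcb hc => ?_⟩
  have hc' : e.symm c ≠ ⊥ := by rwa [ne_eq, ← e.symm.map_bot, e.symm.injective.eq_iff]
  intro hac
  apply h.2 (e.symm c) (e.symm_apply_le.mpr hcb) hc'
  rw [← e.injective.eq_iff, e.map_inf, e.apply_symm_apply, hac, e.map_bot]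

theorem exists_le_maximal_disjoint [CompleteLattice α] [IsCompactlyGenerated α] {a b : α}
    (h : Disjoint a b) : ∃ m, a ≤ m ∧ Maximal (Disjoint · b) m :=
  zorn_le_nonempty₀ _ (fun c hc hchain _ _ =>
    ⟨sSup c, (hchain.directedOn.disjoint_sSup_left).mpr hc, fun _ => le_sSup⟩) a h

end Lattice

section Essential

variable {R M M' : Type*} [Ring R] [AddCommGroup M] [Module R M] [AddCommGroup M'] [Module R M']

theorem IsEssentialSubmodule.mono {A B : Submodule R M} (hA : IsEssentialSubmodule A)
    (hAB : A ≤ B) : IsEssentialSubmodule B :=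
  fun X hX => ne_bot_of_le_ne_bot (hA X hX) (inf_le_inf_right X hAB)

theorem IsEssentialSubmodule.inf {A B : Submodule R M} (hA : IsEssentialSubmodule A)
    (hB : IsEssentialSubmodule B) : IsEssentialSubmodule (A ⊓ B) :=
  fun X hX => by simpa only [inf_assoc] using hA _ (hB X hX)

theorem IsEssentialSubmodule.comap {A : Submodule R M'} (hA : IsEssentialSubmodule A)
    (f : M →ₗ[R] M') : IsEssentialSubmodule (A.comap f) := by
  intro X hX
  by_cases hfX : X.map f = ⊥
  · rw [← LinearMap.le_ker_iff_map] at hfX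
    rwa [inf_eq_right.mpr (hfX.trans (LinearMap.ker_le_comap f))]
  obtain ⟨z, ⟨hzA, x, hxX, rfl⟩, hz⟩ := Submodule.ne_bot_iff _ |>.mp (hA _ hfX)
  exact Submodule.ne_bot_iff _ |>.mpr ⟨x, ⟨hzA, hxX⟩, fun hx => hz (by rw [hx, map_zero])⟩

theorem isEssentialIn_of_disjoint_ker {U : Type*} [AddCommGroup U] [Module R U]
    (hU : IsUniformModule R U) (f : M →ₗ[R] U) {N C : Submodule R M}
    (hC : Disjoint C (LinearMap.ker f)) (hNC : N ≤ C) (hN : N ≠ ⊥) : IsEssentialIn N C := by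
  have map_ne_bot : ∀ Y ≤ C, Y ≠ ⊥ → Y.map f ≠ ⊥ := fun Y hYC hY hfY =>
    hY ((hC.mono_left hYC).eq_bot_of_le (LinearMap.le_ker_iff_map.mpr hfY))
  refine ⟨hNC, fun Y hYC hY hNY => hU.2 _ (map_ne_bot N hNC hN) _ (map_ne_bot Y hYC hY) ?_⟩
  rw [eq_bot_iff]
  rintro _ ⟨⟨n, hn, rfl⟩, y, hy, hyn⟩
  have hny : n - y ∈ C ⊓ LinearMap.ker f :=
    ⟨C.sub_mem (hNC hn) (hYC hy), by simp [LinearMap.mem_ker, hyn]⟩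
  rw [hC.eq_bot, Submodule.mem_bot, sub_eq_zero] at hny
  have hn0 : n ∈ N ⊓ Y := ⟨hn, hny ▸ hy⟩
  rw [hNY, Submodule.mem_bot] at hn0
  simp [hn0]

theorem isCompl_ker_of_map_eq_top {C : Submodule R M} (f : M →ₗ[R] M')
    (hC : Disjoint C (LinearMap.ker f)) (hfC : C.map f = ⊤) : IsCompl C (LinearMap.ker f) :=
  ⟨hC, codisjoint_iff.mpr (by rw [← Submodule.comap_map_eq, hfC, Submodule.comap_top])⟩

theorem exists_isDirectSummand_isEssentialIn_of_map (e : M ≃ₗ[R] M') {N : Submodule R M}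
    (h : ∃ X, IsDirectSummand X ∧ IsEssentialIn (N.map (e : M →ₗ[R] M')) X) :
    ∃ X, IsDirectSummand X ∧ IsEssentialIn N X := by
  obtain ⟨X, ⟨Y, hXY⟩, hNX⟩ := h
  set o := Submodule.orderIsoMapComap e
  refine ⟨o.symm X, ⟨o.symm Y, o.symm.isCompl_iff.mp hXY⟩, ?_⟩
  simpa [o, ← Submodule.orderIsoMapComap_apply] using hNX.map_orderIso o.symm

end Essential

theorem Submodule.comap_ne_bot_of_not_disjoint_range {R M M' : Type*} [Ring R]
    [AddCommGroup M] [Module R M] [AddCommGroup M'] [Module R M'] {f : M' →ₗ[R] M}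
    {N : Submodule R M} (h : ¬Disjoint N (LinearMap.range f)) : N.comap f ≠ ⊥ := by
  contrapose! h
  rw [disjoint_iff, inf_comm, ← Submodule.map_comap_eq, h, Submodule.map_bot]

theorem Submodule.mem_fst_iff {R M M' : Type*} [Ring R] [AddCommGroup M] [Module R M]
    [AddCommGroup M'] [Module R M'] {x : M × M'} : x ∈ Submodule.fst R M M' ↔ x.2 = 0 :=
  Iff.rfl

theorem Submodule.mem_snd_iff {R M M' : Type*} [Ring R] [AddCommGroup M] [Module R M]
    [AddCommGroup M'] [Module R M'] {x : M × M'} : x ∈ Submodule.snd R M M' ↔ x.1 = 0 :=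
  Iff.rfl

theorem Submodule.map_prodComm_fst {R M M' : Type*} [Ring R] [AddCommGroup M] [Module R M]
    [AddCommGroup M'] [Module R M'] :
    (Submodule.fst R M M').map (LinearEquiv.prodComm R M M' : M × M' →ₗ[R] M' × M) =
      Submodule.snd R M' M := by
  ext x
  simp [Submodule.map_equiv_eq_comap_symm, Submodule.mem_fst_iff, Submodule.mem_snd_iff]

section Product

variable {R : Type*} {U : Type u} [Ring R] [AddCommGroup U] [Module R U]

theorem isEssentialSubmodule_of_not_disjoint_fst_of_not_disjoint_snd
    (hU : IsUniformModule R U) {N : Submodule R (U × U)}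
    (h1 : ¬Disjoint N (Submodule.fst R U U)) (h2 : ¬Disjoint N (Submodule.snd R U U)) :
    IsEssentialSubmodule N := by
  rw [Submodule.fst, ← LinearMap.ker, LinearMap.ker_snd] at h1
  rw [Submodule.snd, ← LinearMap.ker, LinearMap.ker_fst] at h2
  have hK1 := hU.2 _ (Submodule.comap_ne_bot_of_not_disjoint_range h1)
  have hK2 := hU.2 _ (Submodule.comap_ne_bot_of_not_disjoint_range h2)
  refine ((hK1.comap (LinearMap.fst R U U)).inf (hK2.comap (LinearMap.snd R U U))).mono ?_
  rintro x ⟨hx1, hx2⟩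
  simpa using N.add_mem hx1 hx2

def projFst (C : Submodule R (U × U)) : C →ₗ[R] Submodule.fst R U U :=
  (Submodule.fstEquiv R U U).symm ∘ₗ (LinearMap.fst R U U).domRestrict C

def projSnd (C : Submodule R (U × U)) : C →ₗ[R] Submodule.snd R U U :=
  (Submodule.sndEquiv R U U).symm ∘ₗ (LinearMap.snd R U U).domRestrict C

theorem projFst_injective {C : Submodule R (U × U)} (hC : Disjoint C (Submodule.snd R U U)) :
    Function.Injective (projFst C) :=
  (Submodule.fstEquiv R U U).symm.injective.comp (LinearMap.injective_domRestrict_iff.mpr hC)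

theorem add_mem_of_maximal_disjoint_snd {C : Submodule R (U × U)}
    (hC : Maximal (Disjoint · (Submodule.snd R U U)) C)
    {P : Submodule R (Submodule.fst R U U)} (hP : ∀ c, projFst C c ∈ P)
    (h : P →ₗ[R] Submodule.snd R U U) (hfac : projSnd C = h ∘ₗ LinearMap.codRestrict P _ hP)
    (ν : P) : ((ν : Submodule.fst R U U) : U × U) + h ν ∈ C := by
  let Γ : P →ₗ[R] U × U :=
    (Submodule.fst R U U).subtype ∘ₗ P.subtype + (Submodule.snd R U U).subtype ∘ₗ h
  have hΓ : Disjoint (LinearMap.range Γ) (Submodule.snd R U U) := by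
    rw [Submodule.disjoint_def]
    rintro _ ⟨μ, rfl⟩ hμ
    have hμ0 : μ = 0 := by
      ext
      · simpa [Γ, Submodule.mem_snd_iff.mp (h μ).2] using Submodule.mem_snd_iff.mp hμ
      · exact Submodule.mem_fst_iff.mp (μ : Submodule.fst R U U).2
    simp [hμ0]
  have hCΓ : C ≤ LinearMap.range Γ := by
    intro x hx
    refine ⟨⟨projFst C ⟨x, hx⟩, hP _⟩, ?_⟩
    have hsnd : h ⟨projFst C ⟨x, hx⟩, hP _⟩ = projSnd C ⟨x, hx⟩ :=
      (LinearMap.congr_fun hfac ⟨x, hx⟩).symm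
    simp only [Γ, LinearMap.add_apply, LinearMap.comp_apply, Submodule.subtype_apply, hsnd]
    simp [projFst, projSnd]
  exact hC.eq_of_le hΓ hCΓ ▸ ⟨ν, rfl⟩

def ExtendsTotallyOrOnto (R : Type*) (U : Type u) [Ring R] [AddCommGroup U] [Module R U] :
    Prop :=
  ∀ (X : Type u) [AddCommGroup X] [Module R X]
    (f : X →ₗ[R] ↥(Submodule.snd R U U)) (g : X →ₗ[R] ↥(Submodule.fst R U U)),
    Function.Injective g →
      (∃ h : ↥(Submodule.fst R U U) →ₗ[R] ↥(Submodule.snd R U U), f = h ∘ₗ g) ∨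
      (∃ (N : Submodule R ↥(Submodule.fst R U U)) (hN : ∀ x, g x ∈ N)
          (h : ↥N →ₗ[R] ↥(Submodule.snd R U U)),
        Function.Surjective h ∧ f = h ∘ₗ LinearMap.codRestrict N g hN)

theorem map_fst_eq_top_or_map_snd_eq_top (hyp : ExtendsTotallyOrOnto R U)
    {C : Submodule R (U × U)} (hC : Maximal (Disjoint · (Submodule.snd R U U)) C) :
    C.map (LinearMap.fst R U U) = ⊤ ∨ C.map (LinearMap.snd R U U) = ⊤ := by
  rcases hyp C (projSnd C) (projFst C) (projFst_injective hC.prop) with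
    ⟨h, hfac⟩ | ⟨P, hP, h, hsurj, hfac⟩
  · refine .inl (eq_top_iff.mpr fun u _ => ⟨_, add_mem_of_maximal_disjoint_snd hC
      (P := ⊤) (fun _ => trivial) (h ∘ₗ Submodule.subtype ⊤) (by rw [hfac]; rfl)
      ⟨(Submodule.fstEquiv R U U).symm u, trivial⟩, ?_⟩)
    simp [Submodule.mem_snd_iff.mp (h _).2]
  · refine .inr (eq_top_iff.mpr fun u _ => ?_)
    obtain ⟨ν, hν⟩ := hsurj ((Submodule.sndEquiv R U U).symm u)
    refine ⟨_, add_mem_of_maximal_disjoint_snd hC hP h hfac ν, ?_⟩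
    simp [hν, Submodule.mem_fst_iff.mp (ν : Submodule.fst R U U).2]

theorem disjoint_ker_snd_sub_fst (hU : IsUniformModule R U) {C : Submodule R (U × U)}
    (hC2 : Disjoint C (Submodule.snd R U U)) (hC1 : ¬Disjoint C (Submodule.fst R U U)) :
    Disjoint C (LinearMap.ker (LinearMap.snd R U U - LinearMap.fst R U U)) := by
  rw [Submodule.fst, ← LinearMap.ker, LinearMap.ker_snd] at hC1
  set F := C.comap (LinearMap.prod LinearMap.id LinearMap.id)
  have hF : F = ⊥ := by
    by_contra hF
    apply hU.2 _ (Submodule.comap_ne_bot_of_not_disjoint_range hC1) F hF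
    rw [eq_bot_iff]
    rintro u ⟨hu1, hu2⟩
    have hu : (0, u) ∈ C ⊓ Submodule.snd R U U := ⟨by simpa using C.sub_mem hu2 hu1, rfl⟩
    rw [hC2.eq_bot] at hu
    simpa using hu
  rw [Submodule.disjoint_def]
  intro x hxC hx
  have hx2 : x.2 = x.1 := sub_eq_zero.mp (LinearMap.mem_ker.mp hx)
  have hxF : x.1 ∈ F := show (x.1, x.1) ∈ C from (Prod.ext rfl hx2 : x = (x.1, x.1)) ▸ hxC
  rw [hF, Submodule.mem_bot] at hxF
  exact Prod.ext hxF (hx2.trans hxF)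

theorem isDirectSummand_of_disjoint_snd (hU : IsUniformModule R U) (hH : IsHollowModule R U)
    {C : Submodule R (U × U)} (hC : Disjoint C (Submodule.snd R U U))
    (hCtop : C.map (LinearMap.fst R U U) = ⊤ ∨ C.map (LinearMap.snd R U U) = ⊤) :
    IsDirectSummand C := by
  by_cases hA : C.map (LinearMap.fst R U U) = ⊤
  · exact ⟨_, isCompl_ker_of_map_eq_top _ hC hA⟩
  have hB := hCtop.resolve_left hA
  by_cases hC1 : Disjoint C (Submodule.fst R U U)
  · exact ⟨_, isCompl_ker_of_map_eq_top _ hC1 hB⟩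
  -- the complement is the diagonal `ker (snd - fst)`
  refine ⟨_, isCompl_ker_of_map_eq_top _ (disjoint_ker_snd_sub_fst hU hC hC1) ?_⟩
  have hsup : C.map (LinearMap.fst R U U) ⊔
      C.map (LinearMap.snd R U U - LinearMap.fst R U U) = ⊤ := by
    rw [eq_top_iff, ← hB]
    simpa using Submodule.map_add_le C (LinearMap.fst R U U)
      (LinearMap.snd R U U - LinearMap.fst R U U)
  by_contra hW
  exact hH.2 _ hA _ hW hsup

theorem exists_isDirectSummand_isEssentialIn_of_disjoint_snd (hU : IsUniformModule R U)
    (hH : IsHollowModule R U) (hyp : ExtendsTotallyOrOnto R U) {N : Submodule R (U × U)}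
    (hN : Disjoint N (Submodule.snd R U U)) (hN0 : N ≠ ⊥) :
    ∃ X, IsDirectSummand X ∧ IsEssentialIn N X := by
  obtain ⟨C, hNC, hC⟩ := exists_le_maximal_disjoint hN
  have hCtop := map_fst_eq_top_or_map_snd_eq_top hyp hC
  exact ⟨C, isDirectSummand_of_disjoint_snd hU hH hC.prop hCtop,
    isEssentialIn_of_disjoint_ker hU (LinearMap.fst R U U) hC.prop hNC hN0⟩

end Product

/-- Let `U` be uniform and hollow, `M = U²`, `U₁ = U × 0`, `U₂ = 0 × U`. Suppose that for
any module `X`, any homomorphism `f : X → U₂` and any injective homomorphism `g : X → U₁`,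
either (i) there is `h : U₁ → U₂` with `f = h ∘ g`, or (ii) there are a submodule `N` of
`U₁` containing the image of `g` and a surjective homomorphism `h : N → U₂` with
`f = h ∘ g`. Then `M` is extending. -/
theorem stmt_8 {R : Type*} {U : Type u} [Ring R] [AddCommGroup U] [Module R U]
    (hU : IsUniformModule R U) (hH : IsHollowModule R U)
    (hyp : ∀ (X : Type u) [AddCommGroup X] [Module R X]
      (f : X →ₗ[R] ↥(Submodule.snd R U U)) (g : X →ₗ[R] ↥(Submodule.fst R U U)),
      Function.Injective g →
        (∃ h : ↥(Submodule.fst R U U) →ₗ[R] ↥(Submodule.snd R U U), f = h ∘ₗ g) ∨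
        (∃ (N : Submodule R ↥(Submodule.fst R U U)) (hN : ∀ x, g x ∈ N)
            (h : ↥N →ₗ[R] ↥(Submodule.snd R U U)),
          Function.Surjective h ∧ f = h ∘ₗ LinearMap.codRestrict N g hN)) :
    IsExtendingModule R (U × U) := by
  intro N
  rcases eq_or_ne N ⊥ with rfl | hN0
  · exact ⟨⊥, ⟨⊤, isCompl_bot_top⟩, le_rfl, fun Y hY hY0 => absurd (le_bot_iff.mp hY) hY0⟩
  by_cases h2 : Disjoint N (Submodule.snd R U U)
  · exact exists_isDirectSummand_isEssentialIn_of_disjoint_snd hU hH hyp h2 hN0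
  by_cases h1 : Disjoint N (Submodule.fst R U U)
  · let e := LinearEquiv.prodComm R U U
    refine exists_isDirectSummand_isEssentialIn_of_map e
      (exists_isDirectSummand_isEssentialIn_of_disjoint_snd hU hH hyp ?_ ?_)
    · simpa [e, Submodule.map_prodComm_fst] using
        h1.map_orderIso (Submodule.orderIsoMapComap e)
    · rwa [ne_eq, Submodule.map_eq_bot_iff]
  · exact ⟨⊤, ⟨⊥, isCompl_top_bot⟩, le_top, fun Y _ =>
      isEssentialSubmodule_of_not_disjoint_fst_of_not_disjoint_snd hU h1 h2 Y⟩
end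

section
/- Consider the ℤ-module ℤ, its submodule 2ℤ, the homomorphism f : 2ℤ → ℤ defined by f(2n) = 3n, and the inclusion map g : 2ℤ → ℤ. Then (i) there is no ℤ-module homomorphism h : ℤ → ℤ such that f = h ∘ g, and (ii) there is no submodule K of ℤ together with an injective ℤ-module homomorphism h : ℤ → ℤ/K such that h ∘ f = π ∘ g, where π : ℤ → ℤ/K is the natural epimorphism. (Since ℤ is uniform and ℤ² is extending as a ℤ-module, this shows that the hypothesis that U is hollow cannot be removed from the characterization of extending squares.) -/
/-!
The map `f` sends `2 ↦ 3`. A map `ℤ → ℤ` extending `f` would send `2` to the even number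
`2 * h 1`, so (i) is impossible. For (ii), an injective `h : ℤ → ℤ/K` forces `K = 0`, because
every nonzero `k ∈ K` kills `ℤ/K` and hence `h k = k • h 1 = 0`; then `h` is multiplication by
some `b ∈ ℤ` and `h 3 = π 2` becomes `3 * b = 2`.
-/

theorem Submodule.eq_bot_of_injective_to_quotient {R : Type*} [CommRing R] {K : Submodule R R}
    (h : R →ₗ[R] R ⧸ K) (hh : Function.Injective h) : K = ⊥ := by
  refine (Submodule.eq_bot_iff K).mpr fun k hk => hh ?_
  obtain ⟨b, hb⟩ := K.mkQ_surjective (h 1)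
  calc h k = k • h 1 := by rw [← map_smul, smul_eq_mul, mul_one]
    _ = K.mkQ (k * b) := by rw [← hb, ← smul_eq_mul, map_smul]
    _ = h 0 := by
      rw [map_zero, Submodule.mkQ_apply, Submodule.Quotient.mk_eq_zero]
      exact Ideal.mul_mem_right b K hk

theorem apply_two_eq_three (f : ↥(Submodule.span ℤ ({2} : Set ℤ)) →ₗ[ℤ] ℤ)
    (hf : ∀ (n : ℤ) (hn : 2 * n ∈ Submodule.span ℤ ({2} : Set ℤ)), f ⟨2 * n, hn⟩ = 3 * n) :
    f ⟨2, Submodule.mem_span_singleton_self 2⟩ = 3 := by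
  simpa using hf 1 (by simp)

/-- Consider the ℤ-module ℤ, its submodule `2ℤ`, the homomorphism `f : 2ℤ → ℤ` with
`f(2n) = 3n`, and the inclusion `g : 2ℤ → ℤ`. Then (i) there is no homomorphism
`h : ℤ → ℤ` with `f = h ∘ g`, and (ii) there are no submodule `K` of `ℤ` and injective
homomorphism `h : ℤ → ℤ/K` with `h ∘ f = π ∘ g`, where `π : ℤ → ℤ/K` is the natural
epimorphism. -/
theorem stmt_11 (f : ↥(Submodule.span ℤ ({2} : Set ℤ)) →ₗ[ℤ] ℤ)
    (hf : ∀ (n : ℤ) (hn : 2 * n ∈ Submodule.span ℤ ({2} : Set ℤ)), f ⟨2 * n, hn⟩ = 3 * n) :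
    (¬ ∃ h : ℤ →ₗ[ℤ] ℤ, f = h ∘ₗ (Submodule.span ℤ ({2} : Set ℤ)).subtype) ∧
    (¬ ∃ (K : Submodule ℤ ℤ) (h : ℤ →ₗ[ℤ] ℤ ⧸ K), Function.Injective h ∧
        h ∘ₗ f = K.mkQ ∘ₗ (Submodule.span ℤ ({2} : Set ℤ)).subtype) := by
  have hf2 := apply_two_eq_three f hf
  constructor
  · rintro ⟨h, rfl⟩
    have h2 : h 2 = 2 * h 1 := by rw [← smul_eq_mul, ← map_smul, smul_eq_mul, mul_one]
    simp only [LinearMap.coe_comp, Function.comp_apply, Submodule.subtype_apply, h2] at hf2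
    omega
  · rintro ⟨K, h, hinj, hh⟩
    obtain rfl := Submodule.eq_bot_of_injective_to_quotient h hinj
    obtain ⟨b, hb⟩ := (⊥ : Submodule ℤ ℤ).mkQ_surjective (h 1)
    have h3 : (⊥ : Submodule ℤ ℤ).mkQ (3 * b) = (⊥ : Submodule ℤ ℤ).mkQ 2 := by
      have := LinearMap.congr_fun hh ⟨2, Submodule.mem_span_singleton_self 2⟩
      simp only [LinearMap.coe_comp, Function.comp_apply, Submodule.subtype_apply, hf2] at this
      rw [← this, ← smul_eq_mul, map_smul, hb, ← map_smul, smul_eq_mul, mul_one]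
    have := (LinearMap.ker_eq_bot.mp (Submodule.ker_mkQ ⊥)) h3
    omega
end

section
/- The ℤ-module ℤ² is extending. -/
/-! Let `X` be the saturation of `N`, the elements of `M` with a nonzero multiple in `N`. Then
`M ⧸ X` is torsion-free and finitely generated, hence free over a PID, so `X` is a direct summand
of `M`. Every nonzero `y ∈ X` has a nonzero multiple in `N`, and that multiple is nonzero since
`M` is torsion-free, so `N` is essential in `X`. -/

theorem isDirectSummand_of_projective_quotient {R M : Type*} [Ring R] [AddCommGroup M]
    [Module R M] (X : Submodule R M) [Module.Projective R (M ⧸ X)] : IsDirectSummand X := by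
  obtain ⟨g, hg⟩ := X.mkQ.exists_rightInverse_of_surjective X.range_mkQ
  have hidem : IsIdempotentElem (g ∘ₗ X.mkQ) := by
    change (g ∘ₗ X.mkQ) ∘ₗ (g ∘ₗ X.mkQ) = g ∘ₗ X.mkQ
    rw [LinearMap.comp_assoc, ← LinearMap.comp_assoc X.mkQ g X.mkQ, hg, LinearMap.id_comp]
  have hker : LinearMap.ker (g ∘ₗ X.mkQ) = X := by
    rw [LinearMap.ker_comp_of_ker_eq_bot _ (LinearMap.ker_eq_bot_of_inverse hg), X.ker_mkQ]
  exact ⟨_, hker ▸ (LinearMap.IsIdempotentElem.isCompl hidem).symm⟩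

namespace Submodule

variable {R M : Type*} [CommRing R] [AddCommGroup M] [Module R M]

def saturation (N : Submodule R M) : Submodule R M :=
  (torsion R (M ⧸ N)).comap N.mkQ

variable [IsDomain R] {N : Submodule R M}

theorem mem_saturation_iff {x : M} : x ∈ N.saturation ↔ ∃ a : R, a ≠ 0 ∧ a • x ∈ N := by
  simp only [saturation, mem_comap, mem_torsion_iff, mkQ_apply, ← Quotient.mk_smul,
    Quotient.mk_eq_zero, Subtype.exists, mem_nonZeroDivisors_iff_ne_zero, Submonoid.mk_smul,
    exists_prop]

theorem le_saturation : N ≤ N.saturation :=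
  fun x hx => mem_saturation_iff.2 ⟨1, one_ne_zero, by rwa [one_smul]⟩

instance isTorsionFree_quotient_saturation : Module.IsTorsionFree R (M ⧸ N.saturation) := by
  refine .of_smul_eq_zero fun r q hrq => or_iff_not_imp_left.2 fun hr => ?_
  induction q using Quotient.induction_on with
  | H x =>
    rw [← Quotient.mk_smul, Quotient.mk_eq_zero, mem_saturation_iff] at hrq
    obtain ⟨a, ha, harx⟩ := hrq
    rw [Quotient.mk_eq_zero, mem_saturation_iff]
    exact ⟨a * r, mul_ne_zero ha hr, by rwa [mul_smul]⟩

theorem inf_ne_bot_of_le_saturation [Module.IsTorsionFree R M] {Y : Submodule R M}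
    (hY : Y ≤ N.saturation) (hY0 : Y ≠ ⊥) : N ⊓ Y ≠ ⊥ := by
  obtain ⟨y, hyY, hy0⟩ := Y.exists_mem_ne_zero_of_ne_bot hY0
  obtain ⟨a, ha, hay⟩ := mem_saturation_iff.1 (hY hyY)
  exact (Submodule.ne_bot_iff _).2 ⟨a • y, ⟨hay, Y.smul_mem a hyY⟩, smul_ne_zero ha hy0⟩

end Submodule

theorem isExtendingModule_of_isTorsionFree (R M : Type*) [CommRing R] [IsDomain R]
    [IsPrincipalIdealRing R] [AddCommGroup M] [Module R M] [Module.Finite R M]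
    [Module.IsTorsionFree R M] : IsExtendingModule R M :=
  fun N => ⟨N.saturation, isDirectSummand_of_projective_quotient _, Submodule.le_saturation,
    fun _ hY hY0 => Submodule.inf_ne_bot_of_le_saturation hY hY0⟩

/-- The ℤ-module ℤ² is extending. -/
theorem stmt_12 : IsExtendingModule ℤ (ℤ × ℤ) :=
  isExtendingModule_of_isTorsionFree ℤ (ℤ × ℤ)
end

section
/- Let p and q be two distinct prime numbers, let ℤ_(p) and ℤ_(q) be the localizations of ℤ at p and q respectively, let R be the ring of matrices [[a, x],[0, b]] with a ∈ ℤ_(p), x ∈ ℚ, b ∈ ℤ_(q), let L be the right ideal of R consisting of matrices [[0, x],[0, y]] with x, y ∈ ℤ_(q), and let U = R/L as a right R-module. Then U is uniserial. -/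
/-- The localization `ℤ_(p)` of `ℤ` at the prime `p`, realized as the subring of `ℚ`
consisting of the fractions `n / d` with `p ∤ d`. -/
def Zloc (p : ℕ) (hp : p.Prime) : Subring ℚ where
  carrier := {x : ℚ | ∃ n d : ℤ, ¬ (p : ℤ) ∣ d ∧ x * d = n}
  zero_mem' := ⟨0, 1, by simpa using (Nat.prime_iff_prime_int.mp hp).not_dvd_one, by norm_num⟩
  one_mem' := ⟨1, 1, by simpa using (Nat.prime_iff_prime_int.mp hp).not_dvd_one, by norm_num⟩
  add_mem' := by
    rintro x y ⟨n1, d1, hd1, h1⟩ ⟨n2, d2, hd2, h2⟩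
    refine ⟨n1 * d2 + n2 * d1, d1 * d2, ?_, ?_⟩
    · intro h
      rcases ((Nat.prime_iff_prime_int.mp hp).dvd_mul.mp h) with h | h
      exacts [hd1 h, hd2 h]
    · push_cast
      push_cast at h1 h2
      calc (x + y) * ((d1 : ℚ) * d2) = (x * d1) * d2 + (y * d2) * d1 := by ring
        _ = (n1 : ℚ) * d2 + (n2 : ℚ) * d1 := by rw [h1, h2]
  neg_mem' := by
    rintro x ⟨n, d, hd, h⟩
    exact ⟨-n, d, hd, by push_cast; linarith⟩
  mul_mem' := by
    rintro x y ⟨n1, d1, hd1, h1⟩ ⟨n2, d2, hd2, h2⟩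
    refine ⟨n1 * n2, d1 * d2, ?_, ?_⟩
    · intro h
      rcases ((Nat.prime_iff_prime_int.mp hp).dvd_mul.mp h) with h | h
      exacts [hd1 h, hd2 h]
    · push_cast
      push_cast at h1 h2
      calc (x * y) * ((d1 : ℚ) * d2) = (x * d1) * (y * d2) := by ring
        _ = (n1 : ℚ) * n2 := by rw [h1, h2]

/-- The triangular matrix ring `[[ℤ_(p), ℚ], [0, ℤ_(q)]]`, as a subring of the `2 × 2`
rational matrices. -/
def TriRing (p q : ℕ) (hp : p.Prime) (hq : q.Prime) :
    Subring (Matrix (Fin 2) (Fin 2) ℚ) where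
  carrier := {A | A 1 0 = 0 ∧ A 0 0 ∈ Zloc p hp ∧ A 1 1 ∈ Zloc q hq}
  zero_mem' := ⟨rfl, (Zloc p hp).zero_mem, (Zloc q hq).zero_mem⟩
  one_mem' := ⟨by simp [Matrix.one_apply], by simpa using (Zloc p hp).one_mem,
    by simpa using (Zloc q hq).one_mem⟩
  add_mem' := by
    rintro A B ⟨hA0, hA1, hA2⟩ ⟨hB0, hB1, hB2⟩
    exact ⟨by simp [hA0, hB0], (Zloc p hp).add_mem hA1 hB1, (Zloc q hq).add_mem hA2 hB2⟩
  neg_mem' := by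
    rintro A ⟨hA0, hA1, hA2⟩
    exact ⟨by simp [hA0], (Zloc p hp).neg_mem hA1, (Zloc q hq).neg_mem hA2⟩
  mul_mem' := by
    rintro A B ⟨hA0, hA1, hA2⟩ ⟨hB0, hB1, hB2⟩
    refine ⟨?_, ?_, ?_⟩
    · simp [Matrix.mul_apply, Fin.sum_univ_two, hA0, hB0]
    · have : (A * B) 0 0 = A 0 0 * B 0 0 + A 0 1 * B 1 0 := by
        simp [Matrix.mul_apply, Fin.sum_univ_two]
      rw [this, hB0, mul_zero, add_zero]
      exact (Zloc p hp).mul_mem hA1 hB1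
    · have : (A * B) 1 1 = A 1 0 * B 0 1 + A 1 1 * B 1 1 := by
        simp [Matrix.mul_apply, Fin.sum_univ_two]
      rw [this, hA0, zero_mul, zero_add]
      exact (Zloc q hq).mul_mem hA2 hB2

/-- The right ideal `L = [[0, ℤ_(q)], [0, ℤ_(q)]]` of `TriRing p q`, as a submodule of the
right module `TriRing p q` over itself. -/
def Lideal (p q : ℕ) (hp : p.Prime) (hq : q.Prime) :
    Submodule (TriRing p q hp hq)ᵐᵒᵖ (TriRing p q hp hq) where
  carrier := {A | (A : Matrix (Fin 2) (Fin 2) ℚ) 0 0 = 0 ∧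
    (A : Matrix (Fin 2) (Fin 2) ℚ) 0 1 ∈ Zloc q hq ∧
    (A : Matrix (Fin 2) (Fin 2) ℚ) 1 1 ∈ Zloc q hq}
  zero_mem' := ⟨rfl, (Zloc q hq).zero_mem, (Zloc q hq).zero_mem⟩
  add_mem' := by
    rintro A B ⟨hA0, hA1, hA2⟩ ⟨hB0, hB1, hB2⟩
    exact ⟨by simp [hA0, hB0], by simpa using (Zloc q hq).add_mem hA1 hB1,
      by simpa using (Zloc q hq).add_mem hA2 hB2⟩
  smul_mem' := by
    rintro r A ⟨hA0, hA1, hA2⟩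
    have hr := r.unop.2
    have hsmul : ((r • A : TriRing p q hp hq) : Matrix (Fin 2) (Fin 2) ℚ) =
        (A : Matrix (Fin 2) (Fin 2) ℚ) * (r.unop : Matrix (Fin 2) (Fin 2) ℚ) := rfl
    refine ⟨?_, ?_, ?_⟩
    · rw [hsmul]
      have : ((A : Matrix (Fin 2) (Fin 2) ℚ) * (r.unop : Matrix (Fin 2) (Fin 2) ℚ)) 0 0 =
          (A : Matrix (Fin 2) (Fin 2) ℚ) 0 0 * (r.unop : Matrix (Fin 2) (Fin 2) ℚ) 0 0 +
          (A : Matrix (Fin 2) (Fin 2) ℚ) 0 1 * (r.unop : Matrix (Fin 2) (Fin 2) ℚ) 1 0 := by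
        simp [Matrix.mul_apply, Fin.sum_univ_two]
      rw [this, hA0, hr.1, zero_mul, mul_zero, add_zero]
    · rw [hsmul]
      have : ((A : Matrix (Fin 2) (Fin 2) ℚ) * (r.unop : Matrix (Fin 2) (Fin 2) ℚ)) 0 1 =
          (A : Matrix (Fin 2) (Fin 2) ℚ) 0 0 * (r.unop : Matrix (Fin 2) (Fin 2) ℚ) 0 1 +
          (A : Matrix (Fin 2) (Fin 2) ℚ) 0 1 * (r.unop : Matrix (Fin 2) (Fin 2) ℚ) 1 1 := by
        simp [Matrix.mul_apply, Fin.sum_univ_two]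
      rw [this, hA0, zero_mul, zero_add]
      exact (Zloc q hq).mul_mem hA1 hr.2.2
    · rw [hsmul]
      have : ((A : Matrix (Fin 2) (Fin 2) ℚ) * (r.unop : Matrix (Fin 2) (Fin 2) ℚ)) 1 1 =
          (A : Matrix (Fin 2) (Fin 2) ℚ) 1 0 * (r.unop : Matrix (Fin 2) (Fin 2) ℚ) 0 1 +
          (A : Matrix (Fin 2) (Fin 2) ℚ) 1 1 * (r.unop : Matrix (Fin 2) (Fin 2) ℚ) 1 1 := by
        simp [Matrix.mul_apply, Fin.sum_univ_two]
      rw [this, A.2.1, zero_mul, zero_add]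
      exact (Zloc q hq).mul_mem hA2 hr.2.2

/-- The uniserial module `U = R/L`. -/
abbrev Umod (p q : ℕ) (hp : p.Prime) (hq : q.Prime) :=
  TriRing p q hp hq ⧸ Lideal p q hp hq

/- Proof idea: `ℤ_(p)` and `ℤ_(q)` are valuation rings, so divisibility in each is total. The
class of `[[a, x], [0, b]]` in `U` depends only on `a` and on `x` modulo `ℤ_(q)`. Given two
classes, if one has nonzero `a`-entry, comparing the `a`-entries in `ℤ_(p)` produces a multiplier
in `R` (its off-diagonal entry absorbs the difference of the `x`-entries); if both `a`-entries
vanish, comparing the `x`-entries in `ℤ_(q)` does. So any two cyclic submodules of `U` are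
comparable, which makes `U` uniserial. -/

theorem isUniserialModule_of_mem_span_singleton_or {R M : Type*} [Ring R] [AddCommGroup M]
    [Module R M] (h : ∀ u v : M, u ∈ Submodule.span R {v} ∨ v ∈ Submodule.span R {u}) :
    IsUniserialModule R M := by
  intro N N'
  by_contra! ⟨hNN', hN'N⟩
  obtain ⟨u, huN, huN'⟩ := SetLike.not_le_iff_exists.mp hNN'
  obtain ⟨v, hvN', hvN⟩ := SetLike.not_le_iff_exists.mp hN'N
  rcases h u v with huv | hvu
  · exact huN' (Submodule.span_singleton_le_iff_mem _ _ |>.mpr hvN' huv)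
  · exact hvN (Submodule.span_singleton_le_iff_mem _ _ |>.mpr huN hvu)

namespace Zloc

variable {p : ℕ} {hp : p.Prime}

theorem mem_or_inv_mem (x : ℚ) : x ∈ Zloc p hp ∨ x⁻¹ ∈ Zloc p hp := by
  by_cases hden : (p : ℤ) ∣ x.den
  · right
    have hpden : p ∣ x.den := Int.ofNat_dvd.mp hden
    have hx : x ≠ 0 := by
      rintro rfl
      exact hp.one_lt.ne' (Nat.dvd_one.mp hpden)
    have hnum : ¬ (p : ℤ) ∣ x.num := fun hpnum =>
      hp.one_lt.ne' (Nat.eq_one_of_dvd_coprimes x.reduced (Int.ofNat_dvd_left.mp hpnum) hpden)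
    refine ⟨x.den, x.num, hnum, ?_⟩
    rw [← Rat.mul_den_eq_num, ← mul_assoc, inv_mul_cancel₀ hx, one_mul, Int.cast_natCast]
  · exact Or.inl ⟨x.num, x.den, hden, by exact_mod_cast Rat.mul_den_eq_num x⟩

theorem exists_mul_eq_or (x y : ℚ) : ∃ c ∈ Zloc p hp, x * c = y ∨ y * c = x := by
  rcases eq_or_ne x 0 with rfl | hx
  · exact ⟨0, zero_mem _, Or.inr (mul_zero y)⟩
  rcases eq_or_ne y 0 with rfl | hy
  · exact ⟨0, zero_mem _, Or.inl (mul_zero x)⟩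
  rcases mem_or_inv_mem (hp := hp) (y / x) with h | h
  · exact ⟨y / x, h, Or.inl (mul_div_cancel₀ y hx)⟩
  · exact ⟨x / y, by rwa [inv_div] at h, Or.inr (mul_div_cancel₀ x hy)⟩

end Zloc

section TriRing

variable {p q : ℕ} {hp : p.Prime} {hq : q.Prime}

local notation "R" => TriRing p q hp hq

theorem mem_Lideal_iff (D : R) :
    D ∈ Lideal p q hp hq ↔ (D : Matrix (Fin 2) (Fin 2) ℚ) 0 0 = 0 ∧
      (D : Matrix (Fin 2) (Fin 2) ℚ) 0 1 ∈ Zloc q hq :=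
  ⟨fun h => ⟨h.1, h.2.1⟩, fun h => ⟨h.1, h.2, D.2.2.2⟩⟩

namespace Umod

theorem mk_mem_span_singleton_of (A B : R) (c x b : ℚ) (hc : c ∈ Zloc p hp)
    (hb : b ∈ Zloc q hq)
    (h00 : (B : Matrix (Fin 2) (Fin 2) ℚ) 0 0 * c = (A : Matrix (Fin 2) (Fin 2) ℚ) 0 0)
    (h01 : (B : Matrix (Fin 2) (Fin 2) ℚ) 0 0 * x + (B : Matrix (Fin 2) (Fin 2) ℚ) 0 1 * b
      - (A : Matrix (Fin 2) (Fin 2) ℚ) 0 1 ∈ Zloc q hq) :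
    (Submodule.Quotient.mk A : Umod p q hp hq) ∈
      Submodule.span Rᵐᵒᵖ {(Submodule.Quotient.mk B : Umod p q hp hq)} := by
  let r : R := ⟨!![c, x; 0, b], by simp [TriRing, hc, hb]⟩
  refine Submodule.mem_span_singleton.mpr ⟨MulOpposite.op r, ?_⟩
  rw [← Submodule.Quotient.mk_smul, Submodule.Quotient.eq, mem_Lideal_iff]
  have hBr : ((MulOpposite.op r • B : R) : Matrix (Fin 2) (Fin 2) ℚ) =
      (B : Matrix (Fin 2) (Fin 2) ℚ) * !![c, x; 0, b] := rfl
  simp only [AddSubgroupClass.coe_sub, Matrix.sub_apply, hBr, Matrix.mul_apply,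
    Fin.sum_univ_two]
  simpa [sub_eq_zero] using ⟨h00, h01⟩

theorem mk_mem_span_singleton_of_diag_mul_eq (A B : R) (c : ℚ) (hc : c ∈ Zloc p hp)
    (hB : (B : Matrix (Fin 2) (Fin 2) ℚ) 0 0 ≠ 0)
    (h : (B : Matrix (Fin 2) (Fin 2) ℚ) 0 0 * c = (A : Matrix (Fin 2) (Fin 2) ℚ) 0 0) :
    (Submodule.Quotient.mk A : Umod p q hp hq) ∈
      Submodule.span Rᵐᵒᵖ {(Submodule.Quotient.mk B : Umod p q hp hq)} := by
  refine mk_mem_span_singleton_of A B c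
    ((A : Matrix (Fin 2) (Fin 2) ℚ) 0 1 / (B : Matrix (Fin 2) (Fin 2) ℚ) 0 0) 0
    hc (zero_mem _) h ?_
  rw [mul_div_cancel₀ _ hB, mul_zero, add_zero, sub_self]
  exact zero_mem _

theorem mk_mem_span_singleton_of_offDiag_mul_eq (A B : R) (c : ℚ) (hc : c ∈ Zloc q hq)
    (hA : (A : Matrix (Fin 2) (Fin 2) ℚ) 0 0 = 0)
    (h : (B : Matrix (Fin 2) (Fin 2) ℚ) 0 1 * c = (A : Matrix (Fin 2) (Fin 2) ℚ) 0 1) :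
    (Submodule.Quotient.mk A : Umod p q hp hq) ∈
      Submodule.span Rᵐᵒᵖ {(Submodule.Quotient.mk B : Umod p q hp hq)} := by
  refine mk_mem_span_singleton_of A B 0 0 c (zero_mem _) hc (by rw [hA, mul_zero]) ?_
  rw [h, mul_zero, zero_add, sub_self]
  exact zero_mem _

theorem mem_span_singleton_or (u v : Umod p q hp hq) :
    u ∈ Submodule.span Rᵐᵒᵖ {v} ∨ v ∈ Submodule.span Rᵐᵒᵖ {u} := by
  obtain ⟨A, rfl⟩ := Submodule.Quotient.mk_surjective _ u
  obtain ⟨B, rfl⟩ := Submodule.Quotient.mk_surjective _ v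
  by_cases hAB :
      (A : Matrix (Fin 2) (Fin 2) ℚ) 0 0 = 0 ∧ (B : Matrix (Fin 2) (Fin 2) ℚ) 0 0 = 0
  · obtain ⟨c, hc, h | h⟩ := Zloc.exists_mul_eq_or (hp := hq)
      ((B : Matrix (Fin 2) (Fin 2) ℚ) 0 1) ((A : Matrix (Fin 2) (Fin 2) ℚ) 0 1)
    · exact Or.inl (mk_mem_span_singleton_of_offDiag_mul_eq A B c hc hAB.1 h)
    · exact Or.inr (mk_mem_span_singleton_of_offDiag_mul_eq B A c hc hAB.2 h)
  · obtain ⟨c, hc, h | h⟩ := Zloc.exists_mul_eq_or (hp := hp)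
      ((B : Matrix (Fin 2) (Fin 2) ℚ) 0 0) ((A : Matrix (Fin 2) (Fin 2) ℚ) 0 0)
    · refine Or.inl (mk_mem_span_singleton_of_diag_mul_eq A B c hc (fun hB => hAB ⟨?_, hB⟩) h)
      rw [← h, hB, zero_mul]
    · refine Or.inr (mk_mem_span_singleton_of_diag_mul_eq B A c hc (fun hA => hAB ⟨hA, ?_⟩) h)
      rw [← h, hA, zero_mul]

end Umod

end TriRing

theorem stmt_13_general (p q : ℕ) (hp : p.Prime) (hq : q.Prime) :
    IsUniserialModule (TriRing p q hp hq)ᵐᵒᵖ (Umod p q hp hq) :=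
  isUniserialModule_of_mem_span_singleton_or Umod.mem_span_singleton_or

/-- For distinct primes `p`, `q`, the right `R`-module `U = R/L` is uniserial, where
`R = [[ℤ_(p), ℚ], [0, ℤ_(q)]]` and `L = [[0, ℤ_(q)], [0, ℤ_(q)]]`. -/
theorem stmt_13 (p q : ℕ) (hp : p.Prime) (hq : q.Prime) (hpq : p ≠ q) :
    IsUniserialModule (TriRing p q hp hq)ᵐᵒᵖ (Umod p q hp hq) :=
  stmt_13_general p q hp hq
end

section
/- Let p and q be two distinct prime numbers, let ℤ_(p) and ℤ_(q) be the localizations of ℤ at p and q respectively, let R be the ring of matrices [[a, x],[0, b]] with a ∈ ℤ_(p), x ∈ ℚ, b ∈ ℤ_(q), let L be the right ideal of R consisting of matrices [[0, x],[0, y]] with x, y ∈ ℤ_(q), and let U = R/L as a right R-module. Then the endomorphism ring End_R(U) is not a local ring. -/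
lemma Zloc.natCast_mul_ne_one {p : ℕ} (hp : p.Prime) {x : ℚ} (hx : x ∈ Zloc p hp) :
    (p : ℚ) * x ≠ 1 := by
  obtain ⟨n, d, hd, hxd⟩ := hx
  intro h
  have hd' : (d : ℚ) = p * n := by rw [← hxd, ← mul_assoc, h, one_mul]
  exact hd ⟨n, by exact_mod_cast hd'⟩

lemma Zloc.inv_natCast_notMem {p : ℕ} (hp : p.Prime) : (p : ℚ)⁻¹ ∉ Zloc p hp := fun h ↦
  Zloc.natCast_mul_ne_one hp h (mul_inv_cancel₀ (Nat.cast_ne_zero.mpr hp.ne_zero))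

lemma IsLocalRing.isUnit_natCast_or_isUnit_natCast {E : Type*} [Ring E] [IsLocalRing E]
    {m n : ℕ} (hmn : m.Coprime n) : IsUnit (m : E) ∨ IsUnit (n : E) := by
  obtain ⟨a, b, hab⟩ := Nat.isCoprime_iff_coprime.mpr hmn
  have hab' : (a : E) * m + (b : E) * n = 1 := by exact_mod_cast congrArg (Int.cast : ℤ → E) hab
  refine (isUnit_or_isUnit_of_add_one hab').imp (fun h ↦ ?_) (fun h ↦ ?_)
  · exact ((Int.cast_commute a (m : E)).isUnit_mul_iff.mp h).2
  · exact ((Int.cast_commute b (n : E)).isUnit_mul_iff.mp h).2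

section
variable {p q : ℕ} {hp : p.Prime} {hq : q.Prime}

lemma mem_Lideal {A : TriRing p q hp hq} : A ∈ Lideal p q hp hq ↔
    (A : Matrix (Fin 2) (Fin 2) ℚ) 0 0 = 0 ∧ (A : Matrix (Fin 2) (Fin 2) ℚ) 0 1 ∈ Zloc q hq ∧
      (A : Matrix (Fin 2) (Fin 2) ℚ) 1 1 ∈ Zloc q hq :=
  Iff.rfl

lemma TriRing.coe_nsmul_apply (n : ℕ) (A : TriRing p q hp hq) (i j : Fin 2) :
    ((n • A : TriRing p q hp hq) : Matrix (Fin 2) (Fin 2) ℚ) i j =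
      n * (A : Matrix (Fin 2) (Fin 2) ℚ) i j := by
  rw [← nsmul_eq_mul]
  rfl

lemma Umod.not_injective_natCast_right :
    ¬ Function.Injective (q : Module.End (TriRing p q hp hq)ᵐᵒᵖ (Umod p q hp hq)) := by
  intro hinj
  let W : TriRing p q hp hq :=
    ⟨!![0, (q : ℚ)⁻¹; 0, 0], rfl, (Zloc p hp).zero_mem, (Zloc q hq).zero_mem⟩
  have hW : W ∉ Lideal p q hp hq := fun h ↦ Zloc.inv_natCast_notMem hq (mem_Lideal.mp h).2.1
  have hqW : q • W ∈ Lideal p q hp hq := by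
    simp only [mem_Lideal, TriRing.coe_nsmul_apply]
    exact ⟨by simp [W], by simp [W, hq.ne_zero], by simp [W]⟩
  apply hW
  rw [← Submodule.Quotient.mk_eq_zero]
  apply hinj
  rw [map_zero, Module.End.natCast_apply, ← Submodule.Quotient.mk_smul,
    Submodule.Quotient.mk_eq_zero]
  exact hqW

lemma Umod.not_surjective_natCast_left :
    ¬ Function.Surjective (p : Module.End (TriRing p q hp hq)ᵐᵒᵖ (Umod p q hp hq)) := by
  intro hsurj
  obtain ⟨u, hu⟩ := hsurj (Submodule.Quotient.mk 1)
  obtain ⟨A, rfl⟩ := Submodule.Quotient.mk_surjective _ u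
  rw [Module.End.natCast_apply, ← Submodule.Quotient.mk_smul, Submodule.Quotient.eq] at hu
  have h00 := (mem_Lideal.mp hu).1
  simp only [AddSubgroupClass.coe_sub, Matrix.sub_apply, TriRing.coe_nsmul_apply, Subring.coe_one,
    Matrix.one_apply_eq, sub_eq_zero] at h00
  exact Zloc.natCast_mul_ne_one hp A.2.2.1 h00

end

/-- For distinct primes `p`, `q`, the endomorphism ring of the right `R`-module `U = R/L`
is not local, where `R = [[ℤ_(p), ℚ], [0, ℤ_(q)]]` and `L = [[0, ℤ_(q)], [0, ℤ_(q)]]`. -/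
theorem stmt_14 (p q : ℕ) (hp : p.Prime) (hq : q.Prime) (hpq : p ≠ q) :
    ¬ IsLocalRing (Module.End (TriRing p q hp hq)ᵐᵒᵖ (Umod p q hp hq)) := by
  intro hloc
  obtain hp_unit | hq_unit := IsLocalRing.isUnit_natCast_or_isUnit_natCast
    (E := Module.End (TriRing p q hp hq)ᵐᵒᵖ (Umod p q hp hq)) ((Nat.coprime_primes hp hq).mpr hpq)
  · exact Umod.not_surjective_natCast_left ((Module.End.isUnit_iff _).mp hp_unit).surjective
  · exact Umod.not_injective_natCast_right ((Module.End.isUnit_iff _).mp hq_unit).injective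
end
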